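/- Gaussian Berezin integral with source: for an invertible antisymmetric 2n×2n matrix A and odd sources η_i (odd elements of an auxiliary Grassmann algebra), ∫ exp(½ θᵀAθ + ηᵀθ) dθ = Pf(A) · exp(½ ηᵀA^{-1}η), where the integral extracts the coefficient of θ₁⋯θ_{2n}. -/

import Mathlib

open Matrix

/-- The ordered monomial `x_I = x_{i_1} * ... * x_{i_k}` associated with a finite
index set `I = {i_1 < ... < i_k}`. -/
def gmonomial {A : Type*} [Ring A] {m : ℕ} (x : Fin m → A) (I : Finset (Fin m)) : A :=
  ((I.sort (· ≤ ·)).map x).prod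

/-- The finite exponential series `sum_{k < N} x^k / k!`. -/
noncomputable def gexp {A : Type*} [Ring A] [Algebra ℂ A] (N : ℕ) (x : A) : A :=
  ∑ k ∈ Finset.range N, ((k.factorial : ℂ))⁻¹ • x ^ k

/-- The Pfaffian of a `2n x 2n` matrix, via
`Pf(A) = (1/(2^n n!)) * sum_sigma sgn(sigma) * prod_i A_{sigma(2i), sigma(2i+1)}`. -/
noncomputable def pfaffian {n : ℕ} (A : Matrix (Fin (2 * n)) (Fin (2 * n)) ℂ) : ℂ :=
  (1 / ((2 : ℂ) ^ n * (n.factorial : ℂ))) *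
    ∑ σ : Equiv.Perm (Fin (2 * n)),
      ((Equiv.Perm.sign σ : ℤ) : ℂ) *
        ∏ i : Fin n,
          A (σ ⟨2 * (i : ℕ), by omega⟩) (σ ⟨2 * (i : ℕ) + 1, by omega⟩)

/-!
Translating `θ` by the source shift `-M⁻¹η` completes the square: the exponent becomes
`½ ψᵀMψ + ½ ηᵀM⁻¹η` with `ψ = θ - M⁻¹η`. Both summands are even, so they commute and the
exponential factors. Each `ψ`-monomial differs from the `θ`-monomial by terms with fewer
`θ`'s, which the Berezin integral kills, so `ψ` is again a system of Berezin generators.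
Products of anticommuting elements are images of `ιMulti` under the universal map out of an
exterior algebra, hence vanish when a letter repeats and are alternating in the letters; this
gives `∫ (½ ψᵀMψ)ᵏ = δₖₙ n! Pf(M)`. Finally `(ηᵀM⁻¹η)ⁿ⁺¹ = 0` because `η` has only `2n`
components, so neither truncation of the exponential series loses a term.
-/

open Finset

def Anticommute {R : Type*} [Mul R] [Neg R] (a b : R) : Prop := a * b = -(b * a)

namespace Anticommute

variable {R : Type*} [Ring R] {a b c d : R}

theorem symm (h : Anticommute a b) : Anticommute b a := by
  rw [Anticommute, h, neg_neg]

theorem add_left (ha : Anticommute a c) (hb : Anticommute b c) : Anticommute (a + b) c := by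
  rw [Anticommute, add_mul, mul_add, ha, hb, neg_add]

theorem commute_mul_mul (hac : Anticommute a c) (had : Anticommute a d)
    (hbc : Anticommute b c) (hbd : Anticommute b d) : Commute (a * b) (c * d) := by
  calc a * b * (c * d) = a * (b * c) * d := by noncomm_ring
    _ = -(a * c * (b * d)) := by rw [hbc]; noncomm_ring
    _ = a * c * (d * b) := by rw [hbd]; noncomm_ring
    _ = -(c * (a * d) * b) := by rw [hac]; noncomm_ring
    _ = c * d * (a * b) := by rw [had]; noncomm_ring

variable [Algebra ℂ R]

theorem of_mem_span {κ : Type*} {ζ : κ → R} {x : R} (hx : x ∈ Submodule.span ℂ (Set.range ζ))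
    (h : ∀ k, Anticommute (ζ k) a) : Anticommute x a := by
  induction hx using Submodule.span_induction with
  | mem y hy => obtain ⟨k, rfl⟩ := hy; exact h k
  | zero => rw [Anticommute, zero_mul, mul_zero, neg_zero]
  | add y z _ _ hy hz => exact hy.add_left hz
  | smul r y _ hy => rw [Anticommute, smul_mul_assoc, mul_smul_comm, hy, smul_neg]

theorem of_mem_span_of_mem_span {κ : Type*} {ζ : κ → R} (h : ∀ k l, Anticommute (ζ k) (ζ l))
    (ha : a ∈ Submodule.span ℂ (Set.range ζ)) (hb : b ∈ Submodule.span ℂ (Set.range ζ)) :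
    Anticommute a b :=
  of_mem_span ha fun k => (of_mem_span hb fun l => h l k).symm

theorem mul_self_eq_zero (h : Anticommute a a) : a * a = 0 := by
  have h2 : (2 : ℂ) • (a * a) = 0 := by
    rw [two_smul]
    nth_rewrite 1 [h]
    exact neg_add_cancel _
  exact (smul_eq_zero.1 h2).resolve_left two_ne_zero

end Anticommute

theorem Matrix.transpose_nonsing_inv_of_transpose_eq_neg {ι : Type*} [Fintype ι] [DecidableEq ι]
    {M : Matrix ι ι ℂ} (hM : Mᵀ = -M) (hMinv : IsUnit M.det) : (M⁻¹)ᵀ = -M⁻¹ := by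
  rw [Matrix.transpose_nonsing_inv, hM]
  exact Matrix.inv_eq_right_inv (by rw [neg_mul_neg, Matrix.mul_nonsing_inv M hMinv])

theorem two_pow_mul_factorial_mul_pfaffian {n : ℕ} (K : Matrix (Fin (2 * n)) (Fin (2 * n)) ℂ) :
    (2 : ℂ) ^ n * n.factorial * pfaffian K =
      ∑ σ : Equiv.Perm (Fin (2 * n)), ((Equiv.Perm.sign σ : ℤ) : ℂ) *
        ∏ i : Fin n, K (σ ⟨2 * (i : ℕ), by omega⟩) (σ ⟨2 * (i : ℕ) + 1, by omega⟩) := by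
  rw [pfaffian, ← mul_assoc, mul_one_div_cancel, one_mul]
  exact mul_ne_zero (pow_ne_zero _ two_ne_zero) (Nat.cast_ne_zero.2 n.factorial_ne_zero)

theorem anticommute_sumElim {R ι κ : Type*} [Ring R] {θ : ι → R} {η : κ → R}
    (hθ : ∀ i j, Anticommute (θ i) (θ j)) (hη : ∀ k l, Anticommute (η k) (η l))
    (hηθ : ∀ k i, Anticommute (η k) (θ i)) :
    ∀ a b, Anticommute (Sum.elim θ η a) (Sum.elim θ η b) := by
  rintro (i | k) (j | l)
  exacts [hθ i j, (hηθ l i).symm, hηθ k j, hη k l]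

namespace Grassmann

section Word

variable {A : Type*} [Ring A] {ι : Type*}

def word (ψ : ι → A) {k : ℕ} (f : Fin k → ι) : A :=
  (List.ofFn fun a => ψ (f a)).prod

theorem word_zero (ψ : ι → A) (f : Fin 0 → ι) : word ψ f = 1 := by
  simp [word]

theorem word_succ (ψ : ι → A) {k : ℕ} (f : Fin (k + 1) → ι) :
    word ψ f = ψ (f 0) * word ψ (fun a => f a.succ) := by
  rw [word, List.ofFn_succ, List.prod_cons, word]

theorem word_cons (ψ : ι → A) {k : ℕ} (i : ι) (f : Fin k → ι) :
    word ψ (Fin.cons i f : Fin (k + 1) → ι) = ψ i * word ψ f := by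
  rw [word_succ]
  simp

theorem mul_word_of_anticommute {κ : Type*} {ζ : κ → A} {a : A} (h : ∀ k, Anticommute (ζ k) a)
    {p : ℕ} (g : Fin p → κ) : a * word ζ g = ((-1 : ℤ) ^ p) • (word ζ g * a) := by
  induction p with
  | zero => simp [word_zero]
  | succ p ih =>
    rw [word_succ, ← mul_assoc, (h (g 0)).symm, neg_mul, mul_assoc, ih, mul_smul_comm, pow_succ,
      mul_neg_one, neg_smul, mul_assoc]

def pairsEquiv (ι : Type*) (k : ℕ) : (Fin (2 * k) → ι) ≃ (Fin k → ι × ι) where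
  toFun F a := (F ⟨2 * a, by omega⟩, F ⟨2 * a + 1, by omega⟩)
  invFun g b := if b.val % 2 = 0 then (g ⟨b / 2, by omega⟩).1 else (g ⟨b / 2, by omega⟩).2
  left_inv F := by
    funext b
    dsimp only
    split_ifs with hb <;> exact congrArg F (Fin.ext (by simp; omega))
  right_inv g := by
    funext a
    ext <;> simp [show (2 * (a : ℕ) + 1) / 2 = a by omega]

theorem word_mul_pairsEquiv (ψ : ι → A) {k : ℕ} (F : Fin (2 * k) → ι) :
    word (fun p : ι × ι => ψ p.1 * ψ p.2) (pairsEquiv ι k F) = word ψ F := by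
  rw [word, word, List.ofFn_mul', List.prod_flatten, List.map_ofFn]
  congr 2
  funext a
  simp [pairsEquiv, List.ofFn_succ]

theorem sum_smul_pow [Algebra ℂ A] {κ : Type*} [Fintype κ] (z : κ → ℂ) (y : κ → A) (k : ℕ) :
    (∑ p, z p • y p) ^ k = ∑ g : Fin k → κ, (∏ a, z (g a)) • word y g := by
  induction k with
  | zero => simp [word_zero]
  | succ k ih =>
    rw [pow_succ', ih, ← (Fin.consEquiv fun _ => κ).sum_comp, Fintype.sum_prod_type, sum_mul]
    refine sum_congr rfl fun p _ => ?_
    rw [mul_sum]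
    refine sum_congr rfl fun g _ => ?_
    change _ = (∏ a, z ((Fin.cons p g : Fin (k + 1) → κ) a)) •
      word y (Fin.cons p g : Fin (k + 1) → κ)
    rw [smul_mul_smul_comm, word_cons, Fin.prod_univ_succ]
    simp only [Fin.cons_zero, Fin.cons_succ]

end Word

section ExteriorAlgebra

variable {A : Type*} [Ring A] [Algebra ℂ A] {ι : Type*}
  (ψ : ι → A) (hψ : ∀ i j, Anticommute (ψ i) (ψ j))

noncomputable def liftAnticommuting : ExteriorAlgebra ℂ (ι →₀ ℂ) →ₐ[ℂ] A :=
  ExteriorAlgebra.lift ℂ ⟨Finsupp.linearCombination ℂ ψ, fun x =>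
    have hx : Finsupp.linearCombination ℂ ψ x ∈ Submodule.span ℂ (Set.range ψ) := by
      rw [← Finsupp.range_linearCombination]
      exact LinearMap.mem_range_self _ x
    (Anticommute.of_mem_span_of_mem_span hψ hx hx).mul_self_eq_zero⟩

include hψ

theorem word_eq_liftAnticommuting_ιMulti {k : ℕ} (f : Fin k → ι) :
    word ψ f = liftAnticommuting ψ hψ
      (ExteriorAlgebra.ιMulti ℂ k fun a => Finsupp.single (f a) 1) := by
  simp [ExteriorAlgebra.ιMulti_apply, map_list_prod, List.map_ofFn, Function.comp_def,
    liftAnticommuting, word]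

theorem word_eq_zero_of_not_injective {k : ℕ} {f : Fin k → ι} (hf : ¬ Function.Injective f) :
    word ψ f = 0 := by
  rw [word_eq_liftAnticommuting_ιMulti ψ hψ, AlternatingMap.map_eq_zero_of_not_injective,
    map_zero]
  exact fun h => hf (Function.Injective.of_comp (f := fun i => Finsupp.single i (1 : ℂ)) h)

theorem word_comp_perm {k : ℕ} (f : Fin k → ι) (σ : Equiv.Perm (Fin k)) :
    word ψ (f ∘ σ) = Equiv.Perm.sign σ • word ψ f := by
  rw [word_eq_liftAnticommuting_ιMulti ψ hψ, word_eq_liftAnticommuting_ιMulti ψ hψ,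
    Units.smul_def, ← map_zsmul, ← Units.smul_def, ← AlternatingMap.map_perm]
  rfl

end ExteriorAlgebra

section Monomial

variable {A : Type*} [Ring A] {m : ℕ} (ψ : Fin m → A)

theorem gmonomial_eq_word (I : Finset (Fin m)) {k : ℕ} (h : I.card = k) :
    gmonomial ψ I = word ψ (I.orderEmbOfFin h) := by
  have hsort : I.sort (· ≤ ·) = List.ofFn fun a : Fin k => I.orderEmbOfFin h a := by
    apply List.ext_getElem
    · simp [h]
    · intro i _ _
      rw [List.getElem_ofFn, Finset.orderEmbOfFin_apply]
      rfl
  rw [gmonomial, hsort, List.map_ofFn]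
  rfl

theorem gmonomial_univ : gmonomial ψ univ = word ψ id := by
  rw [gmonomial_eq_word ψ univ (card_fin m),
    ← orderEmbOfFin_unique (card_fin m) (fun _ => mem_univ _) strictMono_id]

variable [Algebra ℂ A] (hψ : ∀ i j, Anticommute (ψ i) (ψ j))
include hψ

theorem word_perm_eq_sign_smul (σ : Equiv.Perm (Fin m)) :
    word ψ σ = Equiv.Perm.sign σ • gmonomial ψ univ := by
  rw [gmonomial_univ, ← word_comp_perm ψ hψ]
  rfl

theorem word_eq_sign_smul_gmonomial_image {k : ℕ} {f : Fin k → Fin m}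
    (hf : Function.Injective f) :
    word ψ f = Equiv.Perm.sign (Tuple.sort f)⁻¹ • gmonomial ψ (univ.image f) := by
  set σ := Tuple.sort f
  have hcard : (univ.image f).card = k := by
    rw [card_image_of_injective _ hf, card_univ, Fintype.card_fin]
  have hsorted : f ∘ σ = (univ.image f).orderEmbOfFin hcard :=
    orderEmbOfFin_unique hcard (fun _ => mem_image_of_mem f (mem_univ _))
      ((Tuple.monotone_sort f).strictMono_of_injective (hf.comp σ.injective))
  rw [gmonomial_eq_word ψ _ hcard, ← hsorted, ← word_comp_perm ψ hψ]
  congr 1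
  ext a
  simp

end Monomial

section BilinearForm

variable {A : Type*} [Ring A] [Algebra ℂ A] {ι : Type*} [Fintype ι]

def bform (K : Matrix ι ι ℂ) (x y : ι → A) : A :=
  ∑ i, ∑ j, K i j • (x i * y j)

theorem bform_add_left (K : Matrix ι ι ℂ) (x x' y : ι → A) :
    bform K (x + x') y = bform K x y + bform K x' y := by
  simp only [bform, Pi.add_apply, add_mul, smul_add, sum_add_distrib]

theorem bform_add_right (K : Matrix ι ι ℂ) (x y y' : ι → A) :
    bform K x (y + y') = bform K x y + bform K x y' := by
  simp only [bform, Pi.add_apply, mul_add, smul_add, sum_add_distrib]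

theorem bform_neg (K : Matrix ι ι ℂ) (x y : ι → A) : bform (-K) x y = -bform K x y := by
  simp only [bform, Matrix.neg_apply, neg_smul, sum_neg_distrib]

theorem bform_one [DecidableEq ι] (x y : ι → A) : bform 1 x y = ∑ i, x i * y i := by
  simp [bform, Matrix.one_apply, ite_smul]

theorem bform_mulVec_right (K L : Matrix ι ι ℂ) (x y : ι → A) :
    bform K x (fun j => ∑ k, L j k • y k) = bform (K * L) x y := by
  simp only [bform, Matrix.mul_apply, mul_sum, smul_sum, sum_smul, mul_smul_comm, smul_smul]
  exact sum_congr rfl fun i _ => sum_comm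

theorem bform_mulVec_left (K L : Matrix ι ι ℂ) (x y : ι → A) :
    bform K (fun i => ∑ k, L i k • x k) y = bform (Lᵀ * K) x y := by
  simp only [bform, Matrix.mul_apply, Matrix.transpose_apply, sum_mul, smul_sum, sum_smul,
    smul_mul_assoc, smul_smul]
  rw [sum_comm]
  conv_lhs => enter [2, b]; rw [sum_comm]
  rw [sum_comm]
  exact sum_congr rfl fun _ _ => sum_congr rfl fun _ _ => sum_congr rfl fun _ _ => by
    rw [mul_comm]

theorem bform_pow (K : Matrix ι ι ℂ) (ψ : ι → A) (k : ℕ) :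
    bform K ψ ψ ^ k = ∑ F : Fin (2 * k) → ι,
      (∏ a : Fin k, K (F ⟨2 * a, by omega⟩) (F ⟨2 * a + 1, by omega⟩)) • word ψ F := by
  rw [bform, ← Fintype.sum_prod_type', sum_smul_pow, ← (pairsEquiv ι k).sum_comp]
  simp only [word_mul_pairsEquiv]
  rfl

theorem bform_pow_eq_zero (K : Matrix ι ι ℂ) {ψ : ι → A} (hψ : ∀ i j, Anticommute (ψ i) (ψ j))
    {k : ℕ} (hk : Fintype.card ι < 2 * k) : bform K ψ ψ ^ k = 0 := by
  rw [bform_pow]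
  refine sum_eq_zero fun F _ => ?_
  rw [word_eq_zero_of_not_injective ψ hψ, smul_zero]
  intro hF
  simpa using (Fintype.card_le_of_injective F hF).trans_lt hk

theorem bform_mem {B : Subalgebra ℂ A} (K : Matrix ι ι ℂ) {x y : ι → A} (hx : ∀ i, x i ∈ B)
    (hy : ∀ j, y j ∈ B) : bform K x y ∈ B :=
  sum_mem fun i _ => sum_mem fun j _ => B.smul_mem (mul_mem (hx i) (hy j)) _

theorem commute_bform_bform (K L : Matrix ι ι ℂ) {x y : ι → A}
    (h : ∀ i j, Anticommute (x i) (y j)) : Commute (bform K x x) (bform L y y) :=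
  Commute.sum_left _ _ _ fun i _ => Commute.sum_left _ _ _ fun j _ =>
    Commute.sum_right _ _ _ fun k _ => Commute.sum_right _ _ _ fun l _ =>
      ((Anticommute.commute_mul_mul (h i k) (h i l) (h j k) (h j l)).smul_left _).smul_right _

variable [DecidableEq ι]

noncomputable def sourceShift (M : Matrix ι ι ℂ) (η : ι → A) : ι → A :=
  fun i => ∑ k, (-M⁻¹) i k • η k

theorem sourceShift_mem_span (M : Matrix ι ι ℂ) (η : ι → A) (i : ι) :
    sourceShift M η i ∈ Submodule.span ℂ (Set.range η) :=
  Submodule.sum_mem _ fun k _ => Submodule.smul_mem _ _ (Submodule.subset_span ⟨k, rfl⟩)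

theorem add_sourceShift_mem_span {θ η : ι → A} (M : Matrix ι ι ℂ) (i : ι) :
    (θ + sourceShift M η) i ∈ Submodule.span ℂ (Set.range (Sum.elim θ η)) :=
  add_mem (Submodule.subset_span ⟨Sum.inl i, rfl⟩) <|
    Submodule.span_mono (Set.range_subset_iff.2 fun k => Set.mem_range_self (Sum.inr k))
      (sourceShift_mem_span M η i)

theorem complete_square {M : Matrix ι ι ℂ} (hM : Mᵀ = -M) (hMinv : IsUnit M.det)
    {θ η : ι → A} (hηθ : ∀ i j, Anticommute (η i) (θ j)) :
    (1 / 2 : ℂ) • bform M θ θ + ∑ i, η i * θ i =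
      (1 / 2 : ℂ) • bform M (θ + sourceShift M η) (θ + sourceShift M η) +
        (1 / 2 : ℂ) • bform M⁻¹ η η := by
  have hMT := Matrix.transpose_nonsing_inv_of_transpose_eq_neg hM hMinv
  have h₁ : bform M θ (sourceShift M η) = ∑ i, η i * θ i := by
    unfold sourceShift
    rw [bform_mulVec_right, Matrix.mul_neg, Matrix.mul_nonsing_inv M hMinv,
      bform_neg, bform_one, ← sum_neg_distrib]
    exact sum_congr rfl fun i _ => Eq.symm (hηθ i i)
  have h₂ : bform M (sourceShift M η) θ = ∑ i, η i * θ i := by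
    unfold sourceShift
    rw [bform_mulVec_left, Matrix.transpose_neg, hMT, neg_neg,
      Matrix.nonsing_inv_mul M hMinv, bform_one]
  have h₃ : bform M (sourceShift M η) (sourceShift M η) = -bform M⁻¹ η η := by
    unfold sourceShift
    rw [bform_mulVec_left, bform_mulVec_right, Matrix.transpose_neg, hMT, neg_neg,
      Matrix.nonsing_inv_mul M hMinv, Matrix.one_mul, bform_neg]
  rw [bform_add_left, bform_add_right, bform_add_right, h₁, h₂, h₃]
  module

end BilinearForm

section Berezin

variable {A : Type*} [Ring A] [Algebra ℂ A]

def IsBerezinIntegral {m : ℕ} (ber : A →ₗ[ℂ] A) (θ : Fin m → A) (B : Set A) : Prop :=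
  ∀ c ∈ B, ∀ I : Finset (Fin m), ber (c * gmonomial θ I) = if I = univ then c else 0

namespace IsBerezinIntegral

variable {m : ℕ} {ber : A →ₗ[ℂ] A} {θ : Fin m → A}

theorem adjoin {C : Subring A} (h : IsBerezinIntegral ber θ C) :
    IsBerezinIntegral ber θ (Algebra.adjoin ℂ (C : Set A)) := by
  intro c hc I
  rw [SetLike.mem_coe, ← Subalgebra.mem_toSubmodule, Algebra.adjoin_eq_span] at hc
  have hC : Submonoid.closure (C : Set A) = C.toSubmonoid := C.toSubmonoid.closure_eq
  rw [hC] at hc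
  induction hc using Submodule.span_induction with
  | mem c hc => exact h c hc I
  | zero => simp
  | add a b _ _ ha hb => rw [add_mul, map_add, ha, hb]; split_ifs <;> simp
  | smul z a _ ha => rw [smul_mul_assoc, map_smul, ha]; split_ifs <;> simp

variable {B : Set A} (hber : IsBerezinIntegral ber θ B) (hθ : ∀ i j, Anticommute (θ i) (θ j))
include hber hθ

theorem map_mul_word_of_ne {c : A} (hc : c ∈ B) {k : ℕ} (hk : k ≠ m) (f : Fin k → Fin m) :
    ber (c * word θ f) = 0 := by
  by_cases hf : Function.Injective f
  · rw [word_eq_sign_smul_gmonomial_image θ hθ hf, Units.smul_def, mul_smul_comm, map_zsmul,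
      hber c hc, if_neg, smul_zero]
    intro h
    apply hk
    simpa [card_image_of_injective _ hf] using congrArg card h
  · rw [word_eq_zero_of_not_injective θ hθ hf, mul_zero, map_zero]

theorem map_mul_word_perm {c : A} (hc : c ∈ B) (σ : Equiv.Perm (Fin m)) :
    ber (c * word θ σ) = Equiv.Perm.sign σ • c := by
  rw [word_perm_eq_sign_smul θ hθ, Units.smul_def, mul_smul_comm, map_zsmul, hber c hc,
    if_pos rfl, Units.smul_def]

end IsBerezinIntegral

theorem IsBerezinIntegral.map_mul_bform_pow {n : ℕ} {ber : A →ₗ[ℂ] A} {θ : Fin (2 * n) → A}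
    {B : Set A} (hber : IsBerezinIntegral ber θ B) (hθ : ∀ i j, Anticommute (θ i) (θ j))
    {c : A} (hc : c ∈ B) (K : Matrix (Fin (2 * n)) (Fin (2 * n)) ℂ) (k : ℕ) :
    ber (c * bform K θ θ ^ k) =
      if k = n then ((2 : ℂ) ^ n * n.factorial * pfaffian K) • c else 0 := by
  rw [bform_pow, mul_sum, map_sum]
  simp only [mul_smul_comm, map_smul]
  split_ifs with hk
  · subst hk
    rw [two_pow_mul_factorial_mul_pfaffian, sum_smul]
    symm
    refine Fintype.sum_of_injective (fun σ : Equiv.Perm (Fin (2 * k)) => ⇑σ)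
      DFunLike.coe_injective _ _ (fun F hF => ?_) (fun σ => ?_)
    · have hF : ¬ Function.Injective F := fun hinj =>
        hF ⟨Equiv.ofBijective F (Finite.injective_iff_bijective.1 hinj), rfl⟩
      rw [word_eq_zero_of_not_injective θ hθ hF, mul_zero, map_zero, smul_zero]
    · rw [hber.map_mul_word_perm hθ hc, Units.smul_def, ← Int.cast_smul_eq_zsmul ℂ, smul_smul,
        mul_comm]
  · exact sum_eq_zero fun F _ => by rw [hber.map_mul_word_of_ne hθ hc (by omega), smul_zero]

theorem IsBerezinIntegral.map_mul_gaussian_pow {n : ℕ} {ber : A →ₗ[ℂ] A}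
    {θ : Fin (2 * n) → A} {B : Set A} (hber : IsBerezinIntegral ber θ B)
    (hθ : ∀ i j, Anticommute (θ i) (θ j)) {c : A} (hc : c ∈ B)
    (K : Matrix (Fin (2 * n)) (Fin (2 * n)) ℂ) (k : ℕ) :
    ber (c * ((1 / 2 : ℂ) • bform K θ θ) ^ k) =
      if k = n then ((n.factorial : ℂ) * pfaffian K) • c else 0 := by
  rw [smul_pow, mul_smul_comm, map_smul, hber.map_mul_bform_pow hθ hc]
  split_ifs with hk
  · rw [hk, smul_smul, ← mul_assoc, ← mul_assoc, ← mul_pow]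
    norm_num
  · rw [smul_zero]

end Berezin

section Shift

variable {A : Type*} [Ring A] [Algebra ℂ A] {ι κ : Type*}

/-- Receives the lower-order terms of a shifted word `word (θ + c) f - word θ f`; the Berezin
integral kills it because its `θ`-words are too short. -/
def shortWordSpan (θ : ι → A) (ζ : κ → A) (L : ℕ) : Submodule ℂ A :=
  Submodule.span ℂ
    {x | ∃ (p q : ℕ) (g : Fin p → κ) (t : Fin q → ι), q < L ∧ x = word ζ g * word θ t}

variable {θ : ι → A} {ζ : κ → A}

theorem word_mem_shortWordSpan {q L : ℕ} (hq : q < L) (t : Fin q → ι) :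
    word θ t ∈ shortWordSpan θ ζ L :=
  Submodule.subset_span ⟨0, q, Fin.elim0, t, hq, by rw [word_zero, one_mul]⟩

theorem shortWordSpan_mono {L L' : ℕ} (h : L ≤ L') :
    shortWordSpan θ ζ L ≤ shortWordSpan θ ζ L' :=
  Submodule.span_mono <| by
    rintro _ ⟨p, q, g, t, hq, rfl⟩
    exact ⟨p, q, g, t, hq.trans_le h, rfl⟩

theorem mul_mem_shortWordSpan_succ (hζθ : ∀ k i, Anticommute (ζ k) (θ i)) (i : ι) {L : ℕ}
    {x : A} (hx : x ∈ shortWordSpan θ ζ L) : θ i * x ∈ shortWordSpan θ ζ (L + 1) := by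
  induction hx using Submodule.span_induction with
  | mem x hx =>
    obtain ⟨p, q, g, t, hq, rfl⟩ := hx
    rw [← mul_assoc, mul_word_of_anticommute fun k => hζθ k i, smul_mul_assoc, mul_assoc,
      ← word_cons]
    refine zsmul_mem (Submodule.subset_span ?_) _
    exact ⟨p, q + 1, g, Fin.cons i t, by omega, rfl⟩
  | zero => rw [mul_zero]; exact zero_mem _
  | add x y _ _ hx hy => rw [mul_add]; exact add_mem hx hy
  | smul z x _ hx => rw [mul_smul_comm]; exact Submodule.smul_mem _ z hx

theorem mul_mem_shortWordSpan_of_mem_span {y : A} (hy : y ∈ Submodule.span ℂ (Set.range ζ))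
    {L : ℕ} {x : A} (hx : x ∈ shortWordSpan θ ζ L) : y * x ∈ shortWordSpan θ ζ L := by
  induction hy using Submodule.span_induction with
  | mem y hy =>
    obtain ⟨k, rfl⟩ := hy
    induction hx using Submodule.span_induction with
    | mem x hx =>
      obtain ⟨p, q, g, t, hq, rfl⟩ := hx
      rw [← mul_assoc, ← word_cons]
      exact Submodule.subset_span ⟨p + 1, q, Fin.cons k g, t, hq, rfl⟩
    | zero => rw [mul_zero]; exact zero_mem _
    | add x y _ _ hx hy => rw [mul_add]; exact add_mem hx hy
    | smul z x _ hx => rw [mul_smul_comm]; exact Submodule.smul_mem _ z hx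
  | zero => rw [zero_mul]; exact zero_mem _
  | add y y' _ _ hy hy' => rw [add_mul]; exact add_mem hy hy'
  | smul z y _ hy => rw [smul_mul_assoc]; exact Submodule.smul_mem _ z hy

theorem word_add_sub_word_mem (hζθ : ∀ k i, Anticommute (ζ k) (θ i)) {c : ι → A}
    (hc : ∀ i, c i ∈ Submodule.span ℂ (Set.range ζ)) {k : ℕ} (f : Fin k → ι) :
    word (θ + c) f - word θ f ∈ shortWordSpan θ ζ k := by
  induction k with
  | zero => rw [word_zero, word_zero, sub_self]; exact zero_mem _
  | succ k ih =>
    have hd := ih fun a => f a.succ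
    rw [word_succ, word_succ θ]
    set P' := word (θ + c) fun a => f a.succ
    set P := word θ fun a => f a.succ
    rw [show (θ + c) (f 0) * P' - θ (f 0) * P = θ (f 0) * (P' - P) + (c (f 0) * (P' - P)
      + c (f 0) * P) by rw [Pi.add_apply]; noncomm_ring]
    refine add_mem (mul_mem_shortWordSpan_succ hζθ _ hd) (add_mem ?_ ?_)
    · exact shortWordSpan_mono k.le_succ (mul_mem_shortWordSpan_of_mem_span (hc _) hd)
    · exact mul_mem_shortWordSpan_of_mem_span (hc _) (word_mem_shortWordSpan k.lt_succ_self _)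

namespace IsBerezinIntegral

variable {m : ℕ} {ber : A →ₗ[ℂ] A} {θ : Fin m → A} {B : Subalgebra ℂ A}
  (hber : IsBerezinIntegral ber θ B) (hθ : ∀ i j, Anticommute (θ i) (θ j)) (hζ : ∀ k, ζ k ∈ B)
include hber hθ hζ

theorem map_mul_shortWordSpan {c : A} (hc : c ∈ B) {L : ℕ} (hL : L ≤ m) {x : A}
    (hx : x ∈ shortWordSpan θ ζ L) : ber (c * x) = 0 := by
  induction hx using Submodule.span_induction with
  | mem x hx =>
    obtain ⟨p, q, g, t, hq, rfl⟩ := hx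
    have hg : word ζ g ∈ B := list_prod_mem fun y hy => by
      obtain ⟨a, rfl⟩ := List.mem_ofFn.1 hy
      exact hζ (g a)
    rw [← mul_assoc]
    exact hber.map_mul_word_of_ne hθ (mul_mem hc hg) (by omega) t
  | zero => rw [mul_zero, map_zero]
  | add x y _ _ hx hy => rw [mul_add, map_add, hx, hy, add_zero]
  | smul z x _ hx => rw [mul_smul_comm, map_smul, hx, smul_zero]

theorem add_of_mem_span (hζθ : ∀ k i, Anticommute (ζ k) (θ i)) {c : Fin m → A}
    (hc : ∀ i, c i ∈ Submodule.span ℂ (Set.range ζ)) : IsBerezinIntegral ber (θ + c) B := by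
  intro c' hc' I
  set f := I.orderEmbOfFin rfl
  have hdiff := hber.map_mul_shortWordSpan hθ hζ hc'
    ((card_le_univ I).trans_eq (Fintype.card_fin m)) (word_add_sub_word_mem hζθ hc f)
  rw [gmonomial_eq_word _ I rfl, ← sub_add_cancel (word (θ + c) f) (word θ f), mul_add, map_add,
    hdiff, zero_add, ← gmonomial_eq_word θ I rfl, hber c' hc' I]

end IsBerezinIntegral

end Shift

section Exponential

variable {A : Type*} [Ring A] [Algebra ℂ A]

theorem gexp_eq_of_pow_eq_zero {y : A} {n N : ℕ} (hy : y ^ (n + 1) = 0) (hN : n + 1 ≤ N) :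
    gexp N y = gexp (n + 1) y := by
  refine (sum_subset (range_subset_range.2 hN) fun k _ hk => ?_).symm
  rw [pow_eq_zero_of_le (by simpa using hk) hy, smul_zero]

theorem map_add_pow_of_commute (f : A →ₗ[ℂ] A) {x y : A} (hxy : Commute x y) {n : ℕ} {a : ℂ}
    (hf : ∀ j b, f (x ^ j * y ^ b) = if j = n then a • y ^ b else 0) (k : ℕ) :
    f ((x + y) ^ k) = if n ≤ k then ((k.choose n : ℂ) * a) • y ^ (k - n) else 0 := by
  rw [hxy.add_pow, map_sum]
  simp_rw [← nsmul_eq_mul', map_nsmul, hf]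
  simp [smul_ite, ← Nat.cast_smul_eq_nsmul ℂ, smul_smul]

theorem map_gexp_add_of_commute (f : A →ₗ[ℂ] A) {x y : A} (hxy : Commute x y) {n N : ℕ}
    (hy : y ^ (n + 1) = 0) (hN : 2 * n + 1 ≤ N) {a : ℂ}
    (hf : ∀ j b, f (x ^ j * y ^ b) = if j = n then ((n.factorial : ℂ) * a) • y ^ b else 0) :
    f (gexp N (x + y)) = a • gexp (n + 1) y := by
  have hterm : ∀ b, f (((n + b).factorial : ℂ)⁻¹ • (x + y) ^ (n + b)) =
      a • ((b.factorial : ℂ)⁻¹ • y ^ b) := by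
    intro b
    rw [map_smul, map_add_pow_of_commute f hxy hf, if_pos (Nat.le_add_right n b),
      Nat.add_sub_cancel_left, smul_smul, smul_smul]
    congr 1
    have hfac := Nat.add_choose_mul_factorial_mul_factorial b n
    rw [add_comm b n] at hfac
    have hchoose : ((n + b).choose n : ℂ) ≠ 0 :=
      Nat.cast_ne_zero.2 (Nat.choose_pos (Nat.le_add_right n b)).ne'
    have hnfac : (n.factorial : ℂ) ≠ 0 := Nat.cast_ne_zero.2 n.factorial_ne_zero
    rw [← hfac]
    push_cast
    field_simp
  rw [gexp, map_sum, ← Nat.add_sub_cancel' (show n ≤ N by omega), sum_range_add,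
    sum_eq_zero fun k hk => ?_, zero_add]
  · simp_rw [hterm]
    rw [← smul_sum, ← gexp, gexp_eq_of_pow_eq_zero hy (by omega)]
  · rw [map_smul, map_add_pow_of_commute f hxy hf, if_neg (by simpa using hk), smul_zero]

end Exponential

end Grassmann

open Grassmann

theorem gaussian_berezin_with_source_general
    {A : Type*} [Ring A] [Algebra ℂ A] (C : Subring A) (n : ℕ)
    (M : Matrix (Fin (2 * n)) (Fin (2 * n)) ℂ) (hM : Mᵀ = -M)
    (hMinv : IsUnit M.det)
    (θ η : Fin (2 * n) → A)
    (hθ : ∀ i j, θ i * θ j = -(θ j * θ i))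
    (hη : ∀ i j, η i * η j = -(η j * η i))
    (hηθ : ∀ i j, η i * θ j = -(θ j * η i))
    (hηC : ∀ i, η i ∈ C)
    (ber : A →ₗ[ℂ] A)
    (hber : ∀ c ∈ C, ∀ I : Finset (Fin (2 * n)),
      ber (c * gmonomial θ I) = if I = Finset.univ then c else 0) :
    ber (gexp (4 * n + 1)
        ((1 / 2 : ℂ) • (∑ i, ∑ j, M i j • (θ i * θ j)) + ∑ i, η i * θ i)) =
      pfaffian M • gexp (n + 1)
        ((1 / 2 : ℂ) • ∑ i, ∑ j, (M⁻¹) i j • (η i * η j)) := by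
  -- `ψ` and `η` lie in the span of the odd generators `θ ⊔ η`, any two elements of which
  -- anticommute.
  have hodd := anticommute_sumElim hθ hη hηθ
  have hηodd : ∀ k, η k ∈ Submodule.span ℂ (Set.range (Sum.elim θ η)) := fun k =>
    Submodule.subset_span ⟨Sum.inr k, rfl⟩
  set ψ := θ + sourceShift M η
  have hψ : ∀ i j, Anticommute (ψ i) (ψ j) := fun i j =>
    .of_mem_span_of_mem_span hodd (add_sourceShift_mem_span M i) (add_sourceShift_mem_span M j)
  have hψη : ∀ i k, Anticommute (ψ i) (η k) := fun i k =>
    .of_mem_span_of_mem_span hodd (add_sourceShift_mem_span M i) (hηodd k)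
  set B := Algebra.adjoin ℂ (C : Set A)
  have hηB : ∀ i, η i ∈ B := fun i => Algebra.subset_adjoin (hηC i)
  have hberψ : IsBerezinIntegral ber ψ B :=
    (IsBerezinIntegral.adjoin hber).add_of_mem_span hθ hηB hηθ (sourceShift_mem_span M η)
  set S := (1 / 2 : ℂ) • bform M⁻¹ η η
  have hSB : S ∈ B := B.smul_mem (bform_mem M⁻¹ hηB hηB) _
  have hS : S ^ (n + 1) = 0 := by
    rw [smul_pow, bform_pow_eq_zero _ hη (by rw [Fintype.card_fin]; omega), smul_zero]
  have hQS : Commute ((1 / 2 : ℂ) • bform M ψ ψ) S :=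
    ((commute_bform_bform M M⁻¹ hψη).smul_left _).smul_right _
  change ber (gexp _ ((1 / 2 : ℂ) • bform M θ θ + _)) = pfaffian M • gexp (n + 1) S
  rw [complete_square hM hMinv hηθ]
  refine map_gexp_add_of_commute ber hQS hS (by omega) fun k b => ?_
  rw [(hQS.pow_pow k b).eq]
  exact hberψ.map_mul_gaussian_pow hψ (pow_mem hSB b) M k

/-- Gaussian Berezin integral with sources: for an invertible antisymmetric
`2n x 2n` matrix `M` and odd sources `eta_i` (odd elements of the coefficient
Grassmann algebra `C`, anticommuting among themselves and with the Grassmann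
generators `theta_i`),
`int exp((1/2) theta^T M theta + eta^T theta) dtheta
   = Pf(M) * exp((1/2) eta^T M^(-1) eta)`,
where the Berezin integral `ber` extracts the coefficient of the top monomial
`theta_1 ... theta_{2n}`. -/
theorem gaussian_berezin_with_source
    {A : Type*} [Ring A] [Algebra ℂ A] (C : Subring A) (n : ℕ)
    (M : Matrix (Fin (2 * n)) (Fin (2 * n)) ℂ) (hM : Mᵀ = -M)
    (hMinv : IsUnit M.det)
    (θ η : Fin (2 * n) → A)
    (hθ : ∀ i j, θ i * θ j = -(θ j * θ i)) (hθ0 : ∀ i, θ i * θ i = 0)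
    (hη : ∀ i j, η i * η j = -(η j * η i)) (hη0 : ∀ i, η i * η i = 0)
    (hηθ : ∀ i j, η i * θ j = -(θ j * η i))
    (hηC : ∀ i, η i ∈ C)
    (ber : A →ₗ[ℂ] A)
    (hber : ∀ c ∈ C, ∀ I : Finset (Fin (2 * n)),
      ber (c * gmonomial θ I) = if I = Finset.univ then c else 0) :
    ber (gexp (4 * n + 1)
        ((1 / 2 : ℂ) • (∑ i, ∑ j, M i j • (θ i * θ j)) + ∑ i, η i * θ i)) =
      pfaffian M • gexp (n + 1)
        ((1 / 2 : ℂ) • ∑ i, ∑ j, (M⁻¹) i j • (η i * η j)) :=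
  gaussian_berezin_with_source_general C n M hM hMinv θ η hθ hη hηθ hηC ber hber
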